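/- Let Ω be a finite set, F_q a finite field, and C a linear subspace of F_q^Ω. Let G ≤ Sym(Ω) be a subgroup whose order is coprime to q and such that C^g = C for every g ∈ G. Then C^g = C for every g in the 2-closure G^(2); that is, G ≤ PAut(C) implies G^(2) ≤ PAut(C). -/

import Mathlib

/-- Action of a permutation `g` on functions: `f^g (ω) = f (ω^{g⁻¹})`. -/
def permAct {Ω F : Type*} (g : Equiv.Perm Ω) (f : Ω → F) : Ω → F :=
  fun ω => f (g.symm ω)

/-- The 2-closure of a permutation group `G ≤ Sym(Ω)`: all permutations mapping each
`G`-orbit on `Ω × Ω` onto itself. -/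
def twoClosure {Ω : Type*} (G : Subgroup (Equiv.Perm Ω)) : Subgroup (Equiv.Perm Ω) where
  carrier := {g | ∀ α β : Ω, ∃ h ∈ G, g α = h α ∧ g β = h β}
  one_mem' := fun α β => ⟨1, G.one_mem, rfl, rfl⟩
  mul_mem' := by
    intro a b ha hb α β
    obtain ⟨h, hh, h1, h2⟩ := hb α β
    obtain ⟨k, hk, k1, k2⟩ := ha (h α) (h β)
    exact ⟨k * h, G.mul_mem hk hh, by simp [Equiv.Perm.mul_apply, h1, k1],
      by simp [Equiv.Perm.mul_apply, h2, k2]⟩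
  inv_mem' := by
    intro a ha α β
    obtain ⟨h, hh, h1, h2⟩ := ha (a⁻¹ α) (a⁻¹ β)
    refine ⟨h⁻¹, G.inv_mem hh, ?_, ?_⟩
    · have := congrArg (fun z => h⁻¹ z) h1
      simpa using this.symm
    · have := congrArg (fun z => h⁻¹ z) h2
      simpa using this.symm

/-!
Average an arbitrary projection onto `C` over `G`: since `|G|` is invertible in `F`, this gives a
projection `π` onto `C` commuting with every `g ∈ G` (Maschke's trick). A linear map of `F^Ω`
commutes with a permutation `g` exactly when its matrix entries are invariant under `g` acting on
pairs of points, and invariance of the entries under all of `G` forces invariance under `G^(2)`,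
which by definition moves each pair of points as some element of `G` does. So `π` commutes with
`G^(2)` as well, and the range of `π`, which is `C`, is therefore `G^(2)`-invariant.
-/

namespace Representation

section CommRing

variable {k G V : Type*} [CommRing k] [Group G] [Fintype G] [Invertible (Fintype.card G : k)]
  [AddCommGroup V] [Module k V] (ρ : Representation k G V)

theorem averageMap_apply (v : V) :
    ρ.averageMap v = ⅟(Fintype.card G : k) • ∑ g, ρ g v := by
  simp [GroupAlgebra.average, map_sum]

end CommRing

variable {k G V : Type*} [Field k] [Group G] [Fintype G] [Invertible (Fintype.card G : k)]
  [AddCommGroup V] [Module k V] (ρ : Representation k G V)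

theorem exists_isProj_commute {C : Submodule k V} (hC : ∀ g, ∀ v ∈ C, ρ g v ∈ C) :
    ∃ π : V →ₗ[k] V, LinearMap.IsProj C π ∧ ∀ g, Commute π (ρ g) := by
  obtain ⟨r, hr⟩ := LinearMap.exists_leftInverse_of_injective C.subtype C.ker_subtype
  have hr_id (v : V) (hv : v ∈ C) : (r v : V) = v :=
    congrArg Subtype.val (LinearMap.congr_fun hr ⟨v, hv⟩)
  set π := (linHom ρ ρ).averageMap (C.subtype ∘ₗ r)
  have hπ (v : V) : π v = ⅟(Fintype.card G : k) • ∑ g, ρ g (r (ρ g⁻¹ v)) := by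
    simp [π, averageMap_apply, linHom_apply, LinearMap.sum_apply]
  refine ⟨π, ⟨fun v => ?_, fun v hv => ?_⟩, fun g => ?_⟩
  · rw [hπ]
    exact C.smul_mem _ (C.sum_mem fun g _ => hC g _ (r _).2)
  · have hterm (g : G) : ρ g (r (ρ g⁻¹ v)) = v := by
      rw [hr_id _ (hC _ _ hv), ← Module.End.mul_apply, ← map_mul, mul_inv_cancel, map_one,
        Module.End.one_apply]
    simp [hπ, hterm, Finset.card_univ, ← Nat.cast_smul_eq_nsmul k _ v, smul_smul]
  · have hπρ := (mem_linHom_invariants_iff_isIntertwining π).mp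
      (averageMap_invariant (linHom ρ ρ) _)
    exact LinearMap.ext (hπρ.isIntertwining g)

end Representation

theorem FiniteField.natCast_ne_zero_of_coprime_card {F : Type*} [Field F] [Fintype F] {n : ℕ}
    (hn : n.Coprime (Fintype.card F)) : (n : F) ≠ 0 := by
  intro h
  have hchar : ringChar F ∣ n.gcd (Fintype.card F) :=
    Nat.dvd_gcd (ringChar.dvd h) (ringChar.dvd (FiniteField.cast_card_eq_zero F))
  rw [hn.gcd_eq_one, Nat.dvd_one] at hchar
  exact CharP.ringChar_ne_one hchar

theorem LinearMap.IsProj.map_eq_of_commute {R E : Type*} [Ring R] [AddCommGroup E] [Module R E]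
    {C : Submodule R E} {π T : E →ₗ[R] E} (hπ : LinearMap.IsProj C π) (hT : IsUnit T)
    (h : Commute π T) : C.map T = C := by
  rw [← hπ.range]
  exact ((LinearMap.IsIdempotentElem.commute_iff_of_isUnit hT hπ.isIdempotentElem).mp h).1

section PermRep

variable (F Ω : Type*) [CommSemiring F]

def permRep : Representation F (Equiv.Perm Ω) (Ω → F) where
  toFun g := LinearMap.funLeft F F g.symm
  map_one' := rfl
  map_mul' _ _ := rfl

variable {F Ω}

theorem permRep_apply (g : Equiv.Perm Ω) (f : Ω → F) : permRep F Ω g f = permAct g f := rfl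

theorem permRep_single [DecidableEq Ω] (g : Equiv.Perm Ω) (β : Ω) (x : F) :
    permRep F Ω g (Pi.single β x) = Pi.single (g β) x :=
  (Pi.single_comp_equiv g.symm β x).trans (by rw [Equiv.symm_symm])

theorem commute_permRep_iff [Finite Ω] [DecidableEq Ω] (T : (Ω → F) →ₗ[F] (Ω → F))
    (g : Equiv.Perm Ω) :
    Commute T (permRep F Ω g) ↔
      ∀ α β (x : F), T (Pi.single (g β) x) (g α) = T (Pi.single β x) α := by
  constructor
  · intro h α β x
    have := congr($(h.eq) (Pi.single β x) (g α))
    rwa [Module.End.mul_apply, Module.End.mul_apply, permRep_single, permRep_apply, permAct,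
      Equiv.symm_apply_apply] at this
  · intro h
    refine LinearMap.pi_ext fun β x => funext fun ω => ?_
    rw [Module.End.mul_apply, Module.End.mul_apply, permRep_single, permRep_apply, permAct,
      ← h (g.symm ω) β x, Equiv.apply_symm_apply]

theorem commute_permRep_of_mem_twoClosure [Finite Ω] {G : Subgroup (Equiv.Perm Ω)}
    {T : (Ω → F) →ₗ[F] (Ω → F)} (hT : ∀ h ∈ G, Commute T (permRep F Ω h))
    {g : Equiv.Perm Ω} (hg : g ∈ twoClosure G) : Commute T (permRep F Ω g) := by
  classical
  refine (commute_permRep_iff T g).mpr fun α β x => ?_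
  obtain ⟨h, hh, hα, hβ⟩ := hg α β
  rw [hα, hβ]
  exact (commute_permRep_iff T h).mp (hT h hh) α β x

end PermRep

/-- Let `C ≤ F^Ω` be a linear code and `G ≤ Sym(Ω)` a subgroup of
order coprime to `q = |F|` with `C^g = C` for all `g ∈ G`.  Then `C^g = C` for every
`g` in the 2-closure `G^(2)`. -/
theorem two_closure_preserves_code
    {Ω F : Type*} [Fintype Ω] [Field F] [Fintype F]
    (C : Submodule F (Ω → F)) (G : Subgroup (Equiv.Perm Ω))
    (hcop : Nat.Coprime (Nat.card G) (Fintype.card F))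
    (hG : ∀ g ∈ G, permAct g '' (C : Set (Ω → F)) = C) :
    ∀ g ∈ twoClosure G, permAct g '' (C : Set (Ω → F)) = C := by
  let : Fintype G := Fintype.ofFinite G
  let : Invertible (Fintype.card G : F) := invertibleOfNonzero <| by
    rw [← Nat.card_eq_fintype_card]
    exact FiniteField.natCast_ne_zero_of_coprime_card hcop
  have hCG (h : G) (v : Ω → F) (hv : v ∈ C) : permRep F Ω h v ∈ C := by
    rw [← SetLike.mem_coe, ← hG h h.2]
    exact Set.mem_image_of_mem _ hv
  obtain ⟨π, hπ, hπG⟩ :=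
    Representation.exists_isProj_commute ((permRep F Ω).comp G.subtype) hCG
  intro g hg
  have hπg := commute_permRep_of_mem_twoClosure (fun h hh => hπG ⟨h, hh⟩) hg
  have hCg := congrArg SetLike.coe (hπ.map_eq_of_commute ((Group.isUnit g).map _) hπg)
  rwa [Submodule.map_coe] at hCg
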